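/- Let M be a positive definite lattice of rank r ≥ 2 with a basis 𝐛 = (𝔬, μ₁, …, μₙ) (n = r − 1) such that 𝔬 is a distinguished element, and let f = f_{(M,𝐛)}(x₁,…,xₙ) be the associated form of (M,𝐛). Then the following are equivalent: (1) M is admissible; (2) f properly represents an integer satisfying (**); (3) f represents an integer satisfying (**). -/

import Mathlib

/-- An integer `d` satisfies property `(**)`: `4 ∤ d`, `9 ∤ d`, and `p ∤ d` for every
odd prime `p ≡ 2 (mod 3)`. -/
def DStar (d : ℤ) : Prop :=
  ¬ (4 ∣ d) ∧ ¬ (9 ∣ d) ∧ ∀ p : ℕ, p.Prime → p % 2 = 1 → p % 3 = 2 → ¬ ((p : ℤ) ∣ d)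

/-- A positive definite lattice `(M, B)` with distinguished element `𝔬` is admissible if
it has a rank `2` primitive sublattice `K` containing `𝔬` whose discriminant
satisfies `(**)`. -/
def IsAdmissible {M : Type*} [AddCommGroup M] [Module ℤ M]
    (B : M →ₗ[ℤ] M →ₗ[ℤ] ℤ) (o : M) : Prop :=
  ∃ (K : Submodule ℤ M) (c : Module.Basis (Fin 2) ℤ K),
    o ∈ K ∧
    (∀ (x : M) (m : ℤ), m ≠ 0 → m • x ∈ K → x ∈ K) ∧
    DStar (B (c 0 : M) (c 0 : M) * B (c 1 : M) (c 1 : M) -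
           B (c 0 : M) (c 1 : M) * B (c 1 : M) (c 0 : M))

/-!
For `v = ∑ xᵢ μᵢ` the associated form is `f x = disc ⟨𝔬, v⟩`, and this discriminant does not
change when `v` is replaced by `v + t 𝔬`. If `K` is admissible, `𝔬` is primitive in `K`
because `(𝔬.𝔬) = 3` is squarefree, so it extends to a basis `(𝔬, w)` of `K`; the coordinates
`x` of `w` along `μ₁, …, μₙ` give `f x = disc K`. They are coprime: if `d` divides every `xᵢ`,
then `v / d` lies in the saturated lattice `K`, so `disc K = d² k² disc K` for an integer `k`.
Conversely, for a primitive `x` with `f x ≠ 0`, the lattice spanned by `𝔬` and `v` has rank 2,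
is saturated because `x` is primitive and `𝔬` is a basis vector of `M`, and has discriminant
`f x`. Finally `f (g • y) = g² f y`, and `(**)` passes to divisors.
-/

open Module

lemma DStar.of_dvd {c d : ℤ} (hcd : c ∣ d) (h : DStar d) : DStar c :=
  ⟨fun h4 => h.1 (h4.trans hcd), fun h9 => h.2.1 (h9.trans hcd),
   fun p hp h2 h3 hpd => h.2.2 p hp h2 h3 (hpd.trans hcd)⟩

lemma DStar.ne_zero {d : ℤ} (h : DStar d) : d ≠ 0 := by
  rintro rfl
  exact h.1 (dvd_zero 4)

section PairDisc

variable {R M : Type*} [CommRing R] [AddCommGroup M] [Module R M] (B : M →ₗ[R] M →ₗ[R] R)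

def pairDisc (u w : M) : R := B u u * B w w - B u w * B w u

@[simp]
lemma pairDisc_zero_right (u : M) : pairDisc B u 0 = 0 := by
  simp [pairDisc]

lemma pairDisc_smul_right (u w : M) (d : R) : pairDisc B u (d • w) = d ^ 2 * pairDisc B u w := by
  simp only [pairDisc, map_smul, LinearMap.smul_apply, smul_eq_mul]
  ring

lemma pairDisc_smul_add_right (u w : M) (t : R) : pairDisc B u (t • u + w) = pairDisc B u w := by
  simp only [pairDisc, map_add, map_smul, LinearMap.add_apply, LinearMap.smul_apply, smul_eq_mul]
  ring

lemma pairDisc_smul_add_smul (a b p q : R) (u w : M) :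
    pairDisc B (a • u + b • w) (p • u + q • w) = (a * q - b * p) ^ 2 * pairDisc B u w := by
  simp only [pairDisc, map_add, map_smul, LinearMap.add_apply, LinearMap.smul_apply, smul_eq_mul]
  ring

lemma Submodule.coe_eq_repr_smul_add_repr_smul {K : Submodule R M} (c : Basis (Fin 2) R K)
    (u : K) : (u : M) = c.repr u 0 • (c 0 : M) + c.repr u 1 • (c 1 : M) := by
  have h := congrArg Subtype.val (c.sum_repr u)
  rw [Fin.sum_univ_two] at h
  simpa using h.symm

lemma pairDisc_eq_sq_mul_pairDisc_basis {K : Submodule R M} (c : Basis (Fin 2) R K) (u w : K) :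
    pairDisc B (u : M) w =
      (c.repr u 0 * c.repr w 1 - c.repr u 1 * c.repr w 0) ^ 2 * pairDisc B (c 0 : M) (c 1) := by
  rw [← pairDisc_smul_add_smul, ← Submodule.coe_eq_repr_smul_add_repr_smul,
    ← Submodule.coe_eq_repr_smul_add_repr_smul]

lemma linearIndependent_pair_of_pairDisc_ne_zero [IsDomain R] {u w : M}
    (h : pairDisc B u w ≠ 0) : LinearIndependent R ![u, w] := by
  refine LinearIndependent.pair_iff.2 fun s t hst => ?_
  have hu : s * B u u + t * B w u = 0 := by
    simpa using congrArg (B · u) hst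
  have hw : s * B u w + t * B w w = 0 := by
    simpa using congrArg (B · w) hst
  have hs : s * pairDisc B u w = 0 := by
    unfold pairDisc
    linear_combination B w w * hu - B w u * hw
  have ht : t * pairDisc B u w = 0 := by
    unfold pairDisc
    linear_combination B u u * hw - B u w * hu
  exact ⟨(mul_eq_zero.1 hs).resolve_right h, (mul_eq_zero.1 ht).resolve_right h⟩

end PairDisc

section Basis

variable {R M : Type*} [CommRing R] [AddCommGroup M] [Module R M] {n : ℕ}

lemma sum_smul_smul_eq_smul_sum {ι : Type*} [Fintype ι] (g : R) (y : ι → R) (e : ι → M) :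
    ∑ i, (g • y) i • e i = g • ∑ i, y i • e i := by
  simp [Finset.smul_sum, mul_smul]

lemma Module.Basis.eq_repr_zero_smul_add_sum_succ (b : Basis (Fin (n + 1)) R M) (w : M) :
    w = b.repr w 0 • b 0 + ∑ i : Fin n, b.repr w i.succ • b i.succ := by
  conv_lhs => rw [← b.sum_repr w]
  exact Fin.sum_univ_succ _

lemma Module.Basis.repr_sum_smul_succ (b : Basis (Fin (n + 1)) R M) (x : Fin n → R) :
    ⇑(b.repr (∑ i, x i • b i.succ)) = Fin.cons 0 x := by
  rw [← b.repr_sum_self (Fin.cons 0 x), Fin.sum_univ_succ]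
  simp

end Basis

section PrimitiveVector

variable {ι : Type*}

def IsPrimitiveVector (x : ι → ℤ) : Prop := ∀ d : ℤ, (∀ i, d ∣ x i) → IsUnit d

lemma eq_smul_ediv_of_forall_dvd {x : ι → ℤ} {d : ℤ} (h : ∀ i, d ∣ x i) :
    x = d • fun i => x i / d :=
  funext fun i => (Int.mul_ediv_cancel' (h i)).symm

variable [Fintype ι]

lemma IsPrimitiveVector.dvd_of_forall_dvd_mul {x : ι → ℤ} (hx : IsPrimitiveVector x) {m t : ℤ}
    (h : ∀ i, m ∣ t * x i) : m ∣ t := by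
  have hm : m ∣ Finset.univ.gcd fun i => t * x i :=
    Finset.dvd_gcd fun i _ => h i
  rw [Finset.gcd_mul_left] at hm
  have hunit : IsUnit (Finset.univ.gcd x) := hx _ fun i => Finset.gcd_dvd (Finset.mem_univ i)
  exact dvd_normalize_iff.1 (hunit.dvd_mul_right.1 hm)

lemma exists_isPrimitiveVector_smul_eq {x : ι → ℤ} (hx : x ≠ 0) :
    ∃ (g : ℤ) (y : ι → ℤ), IsPrimitiveVector y ∧ x = g • y := by
  set g := Finset.univ.gcd x
  have hg : ∀ i, g ∣ x i := fun i => Finset.gcd_dvd (Finset.mem_univ i)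
  have hg0 : g ≠ 0 := fun h0 =>
    hx (funext fun i => Finset.gcd_eq_zero_iff.1 h0 i (Finset.mem_univ i))
  refine ⟨g, _, fun e he => isUnit_of_dvd_one ?_, eq_smul_ediv_of_forall_dvd hg⟩
  rw [← mul_dvd_mul_iff_left hg0, mul_one]
  refine Finset.dvd_gcd fun i _ => ?_
  rw [← Int.mul_ediv_cancel' (hg i)]
  exact mul_dvd_mul_left g (he i)

end PrimitiveVector

section Saturation

variable {R M : Type*} [CommRing R] [AddCommGroup M] [Module R M] (B : M →ₗ[R] M →ₗ[R] R)

def Submodule.IsSaturated (K : Submodule R M) : Prop :=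
  ∀ (x : M) (m : R), m ≠ 0 → m • x ∈ K → x ∈ K

lemma exists_pairDisc_eq_of_squarefree [IsBezout R] {K : Submodule R M} (c : Basis (Fin 2) R K)
    {o : M} (ho : o ∈ K) (h : Squarefree (B o o)) :
    ∃ w ∈ K, pairDisc B o w = pairDisc B (c 0 : M) (c 1) := by
  set a := c.repr ⟨o, ho⟩ 0
  set β := c.repr ⟨o, ho⟩ 1
  have hoab : o = a • (c 0 : M) + β • (c 1 : M) :=
    Submodule.coe_eq_repr_smul_add_repr_smul c ⟨o, ho⟩
  have hrel : IsRelPrime a β := by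
    rintro d ⟨a', ha'⟩ ⟨β', hβ'⟩
    set u := a' • (c 0 : M) + β' • (c 1 : M)
    have hou : o = d • u := by
      rw [hoab, ha', hβ', smul_add, mul_smul, mul_smul]
    refine h d ⟨B u u, ?_⟩
    rw [hou, map_smul, map_smul, LinearMap.smul_apply, smul_eq_mul, smul_eq_mul, mul_assoc]
  obtain ⟨p, q, hpq⟩ := hrel.isCoprime
  refine ⟨(-q) • (c 0 : M) + p • (c 1 : M),
    K.add_mem (K.smul_mem _ (c 0).2) (K.smul_mem _ (c 1).2), ?_⟩
  rw [hoab, pairDisc_smul_add_smul, show a * p - β * -q = 1 by linear_combination hpq,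
    one_pow, one_mul]

lemma isUnit_of_smul_eq_of_isSaturated [IsDomain R] {K : Submodule R M} (hK : K.IsSaturated)
    (c : Basis (Fin 2) R K) {u v v' : M} (hu : u ∈ K) (hv : v ∈ K)
    (huv : pairDisc B u v = pairDisc B (c 0 : M) (c 1)) (h0 : pairDisc B u v ≠ 0) {d : R}
    (hd : d • v' = v) : IsUnit d := by
  have hd0 : d ≠ 0 := by
    rintro rfl
    rw [zero_smul] at hd
    subst hd
    exact h0 (pairDisc_zero_right B u)
  have hv' : v' ∈ K := hK v' d hd0 (hd ▸ hv)
  set k := c.repr ⟨u, hu⟩ 0 * c.repr ⟨v', hv'⟩ 1 - c.repr ⟨u, hu⟩ 1 * c.repr ⟨v', hv'⟩ 0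
  have hk : pairDisc B u v = (d * k) ^ 2 * pairDisc B u v := by
    calc pairDisc B u v = d ^ 2 * pairDisc B u v' := by rw [← hd, pairDisc_smul_right]
      _ = d ^ 2 * (k ^ 2 * pairDisc B u v) := by
        rw [huv, ← pairDisc_eq_sq_mul_pairDisc_basis B c ⟨u, hu⟩ ⟨v', hv'⟩]
      _ = (d * k) ^ 2 * pairDisc B u v := by ring
  have hdk : d * (d * k ^ 2) = 1 := by
    linear_combination (mul_right_cancel₀ h0 (hk.symm.trans (one_mul _).symm))
  exact .of_mul_eq_one _ hdk

end Saturation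

section Lattice

variable {M : Type*} [AddCommGroup M] {B : M →ₗ[ℤ] M →ₗ[ℤ] ℤ}

lemma isAdmissible_of_linearIndependent {o v : M} (hli : LinearIndependent ℤ ![o, v])
    (hK : (Submodule.span ℤ {o, v}).IsSaturated) (hD : DStar (pairDisc B o v)) :
    IsAdmissible B o := by
  have hrange : Set.range ![o, v] = {o, v} := Matrix.range_cons_cons_empty o v _
  refine ⟨_, Basis.span hli, Submodule.subset_span (Set.mem_range_self 0), hrange ▸ hK, ?_⟩
  simpa [pairDisc] using hD

lemma exists_isPrimitiveVector_dStar_pairDisc {ι : Type*} [Fintype ι] {u : M} {e : ι → M}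
    {x : ι → ℤ} (hD : DStar (pairDisc B u (∑ i, x i • e i))) :
    ∃ y : ι → ℤ, IsPrimitiveVector y ∧ DStar (pairDisc B u (∑ i, y i • e i)) := by
  have hx0 : x ≠ 0 := by
    rintro rfl
    exact hD.ne_zero (by simp)
  obtain ⟨g, y, hy, rfl⟩ := exists_isPrimitiveVector_smul_eq hx0
  refine ⟨y, hy, hD.of_dvd ⟨g ^ 2, ?_⟩⟩
  rw [sum_smul_smul_eq_smul_sum, pairDisc_smul_right, mul_comm]

variable {n : ℕ} (b : Basis (Fin (n + 1)) ℤ M)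

lemma IsAdmissible.exists_isPrimitiveVector (h : IsAdmissible B (b 0))
    (hsq : Squarefree (B (b 0) (b 0))) :
    ∃ x : Fin n → ℤ, IsPrimitiveVector x ∧ DStar (pairDisc B (b 0) (∑ i, x i • b i.succ)) := by
  obtain ⟨K, c, hoK, hK, hD⟩ := h
  obtain ⟨w, hwK, hw⟩ := exists_pairDisc_eq_of_squarefree B c hoK hsq
  set x : Fin n → ℤ := fun i => b.repr w i.succ
  have hwx : w = b.repr w 0 • b 0 + ∑ i, x i • b i.succ := b.eq_repr_zero_smul_add_sum_succ w
  have hvK : ∑ i, x i • b i.succ ∈ K :=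
    eq_sub_of_add_eq' hwx.symm ▸ K.sub_mem hwK (K.smul_mem (b.repr w 0) hoK)
  have hx : pairDisc B (b 0) (∑ i, x i • b i.succ) = pairDisc B (c 0 : M) (c 1) := by
    rw [← pairDisc_smul_add_right B _ _ (b.repr w 0), ← hwx, hw]
  refine ⟨x, fun d hd => ?_, hx ▸ hD⟩
  refine isUnit_of_smul_eq_of_isSaturated B hK c hoK hvK hx (hx ▸ hD.ne_zero)
    (v' := ∑ i, (x i / d) • b i.succ) ?_
  rw [← sum_smul_smul_eq_smul_sum, ← eq_smul_ediv_of_forall_dvd hd]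

lemma isSaturated_span_pair {x : Fin n → ℤ} (hx : IsPrimitiveVector x) :
    (Submodule.span ℤ {b 0, ∑ i, x i • b i.succ}).IsSaturated := by
  intro y m hm hy
  obtain ⟨s, t, hst⟩ := Submodule.mem_span_pair.1 hy
  have hcoord : ∀ j, s * b.repr (b 0) j + t * (Fin.cons 0 x : Fin (n + 1) → ℤ) j =
      m * b.repr y j := by
    intro j
    have h := congrArg (b.repr · j) hst
    simp only [map_add, map_smul, Finsupp.add_apply, Finsupp.smul_apply, smul_eq_mul] at h
    rwa [b.repr_sum_smul_succ] at h
  have hs : s = m * b.repr y 0 := by simpa using hcoord 0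
  obtain ⟨t', rfl⟩ : m ∣ t := hx.dvd_of_forall_dvd_mul fun i =>
    ⟨b.repr y i.succ, by simpa [Fin.succ_ne_zero] using hcoord i.succ⟩
  have := b.isTorsionFree
  refine Submodule.mem_span_pair.2 ⟨b.repr y 0, t', smul_right_injective M hm ?_⟩
  simp only [smul_add, smul_smul, ← hs, hst]

end Lattice

theorem admissible_iff_represents_dstar
    {M : Type*} [AddCommGroup M] [Module ℤ M]
    (n : ℕ)
    (B : M →ₗ[ℤ] M →ₗ[ℤ] ℤ)
    (hsymm : ∀ x y : M, B x y = B y x)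
    (b : Module.Basis (Fin (n + 1)) ℤ M)
    (o : M) (ho : b 0 = o) (ho3 : B o o = 3)
    (f : (Fin n → ℤ) → ℤ)
    (hf : ∀ x : Fin n → ℤ,
      f x = 3 * B (∑ i, x i • b i.succ) (∑ i, x i • b i.succ) -
            (B o (∑ i, x i • b i.succ)) ^ 2) :
    (IsAdmissible B o ↔
      ∃ x : Fin n → ℤ, (∀ d : ℤ, (∀ i, d ∣ x i) → IsUnit d) ∧ DStar (f x)) ∧
    ((∃ x : Fin n → ℤ, (∀ d : ℤ, (∀ i, d ∣ x i) → IsUnit d) ∧ DStar (f x)) ↔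
      ∃ x : Fin n → ℤ, DStar (f x)) := by
  -- `IsAdmissible` takes bases of `K` for its canonical `ℤ`-module structure; it agrees with the
  -- submodule structure definitionally once `M` carries its canonical one as well.
  obtain rfl : ‹Module ℤ M› = AddCommGroup.toIntModule M := Subsingleton.elim _ _
  subst ho
  have hfv : ∀ x, f x = pairDisc B (b 0) (∑ i, x i • b i.succ) := fun x => by
    rw [hf, pairDisc, ho3, hsymm _ (b 0)]
    ring
  simp only [hfv]
  refine ⟨⟨fun h => h.exists_isPrimitiveVector b (ho3 ▸ Int.prime_three.squarefree), ?_⟩,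
    fun ⟨x, _, hD⟩ => ⟨x, hD⟩, fun ⟨_, hD⟩ => exists_isPrimitiveVector_dStar_pairDisc hD⟩
  rintro ⟨x, hx, hD⟩
  exact isAdmissible_of_linearIndependent
    (linearIndependent_pair_of_pairDisc_ne_zero B hD.ne_zero) (isSaturated_span_pair b hx) hD
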